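/- Let F ∈ S♯_d with d > 2, let f_0 satisfy 0 ≤ lexp(f_0) ≤ 1/d, and let G = T^♭S_k T^♭S_{k−1}⋯T^♭S_1 with shifts S_1,…,S_k. Then ℓ_j = deg S_j for j = 1,…,k; in particular, the well-definedness condition ℓ_j > 1/d is automatically satisfied, so G(f_0) is always well defined when d > 2. -/

import Mathlib

open Complex MeasureTheory Filter Topology Asymptotics Finset

noncomputable section

/-- An element of the extended Selberg class `S♯`: a Dirichlet series, absolutely
convergent for `Re s > 1`, with meromorphic continuation `F` whose only possible pole
is at `s = 1` (of order `≤ m`), entire of finite order after multiplying by `(s-1)^m`,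
satisfying a Riemann-type functional equation. -/
structure ExtSelberg where
  a : ℕ → ℂ
  ha0 : a 0 = 0
  F : ℂ → ℂ
  m : ℕ
  Q : ℝ
  hQ : 0 < Q
  r : ℕ
  lam : Fin r → ℝ
  hlam : ∀ j, 0 < lam j
  mu : Fin r → ℂ
  hmu : ∀ j, 0 ≤ (mu j).re
  w : ℂ
  hw : ‖w‖ = 1
  hsum : ∀ σ : ℝ, 1 < σ → Summable fun n : ℕ => ‖a n‖ * (n : ℝ) ^ (-σ)
  hF : ∀ s : ℂ, 1 < s.re → F s = ∑' n : ℕ, a n * (n : ℂ) ^ (-s)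
  hcont : ∃ G : ℂ → ℂ, Differentiable ℂ G ∧
    (∃ C A : ℝ, ∀ s, ‖G s‖ ≤ C * Real.exp (‖s‖ ^ A)) ∧
    ∀ s, s ≠ 1 → G s = (s - 1) ^ m * F s
  hfe : ∀ s : ℂ,
    (∀ j, ∀ n : ℕ, (lam j : ℂ) * s + mu j ≠ -(n : ℂ)) →
    (∀ j, ∀ n : ℕ, (lam j : ℂ) * (1 - s) + (starRingEnd ℂ) (mu j) ≠ -(n : ℂ)) →
    s ≠ 1 → s ≠ 0 →
    (Q : ℂ) ^ s * (∏ j, Complex.Gamma ((lam j : ℂ) * s + mu j)) * F s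
      = w * (Q : ℂ) ^ (1 - s) *
        (∏ j, Complex.Gamma ((lam j : ℂ) * (1 - s) + (starRingEnd ℂ) (mu j))) *
        (starRingEnd ℂ) (F ((starRingEnd ℂ) (1 - s)))

/-- The degree `d = 2∑λⱼ`. -/
def ExtSelberg.degree (E : ExtSelberg) : ℝ := 2 * ∑ j, E.lam j

/-- The conductor `q_F = (2π)^d Q² ∏ λⱼ^{2λⱼ}`. -/
def ExtSelberg.conductor (E : ExtSelberg) : ℝ :=
  (2 * Real.pi) ^ E.degree * E.Q ^ 2 * ∏ j, E.lam j ^ (2 * E.lam j)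

/-- The internal shift `θ_F = (2/d) Im(∑ μⱼ)`. -/
def ExtSelberg.theta (E : ExtSelberg) : ℝ := (2 / E.degree) * (∑ j, E.mu j).im

/-- The exact order `m_F` of the pole of `F` at `s = 1` (`0` if `F` is entire). -/
def ExtSelberg.polarOrder (E : ExtSelberg) : ℕ :=
  sInf {k : ℕ | ∃ G : ℂ → ℂ, Differentiable ℂ G ∧ ∀ s, s ≠ 1 → G s = (s - 1) ^ k * E.F s}

/-- A (generalized) twist function `f(ξ) = ∑ ακ ξ^κ`, encoded as the finitely
supported family of its coefficients, indexed by the (real) exponents. -/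
abbrev TwistFun := ℝ →₀ ℝ

/-- All exponents are nonnegative. -/
def ValidT (f : TwistFun) : Prop := ∀ κ ∈ f.support, 0 ≤ κ

/-- The leading exponent `lexp(f) = κ₀` (junk value `0` for `f = 0`). -/
def lexpT (f : TwistFun) : ℝ :=
  if h : f.support.Nonempty then f.support.max' h else 0

/-- Evaluation `f(ξ) = ∑ ακ ξ^κ`. -/
def evalT (f : TwistFun) (ξ : ℝ) : ℝ := ∑ κ ∈ f.support, f κ * ξ ^ κ

/-- `e(x) = e^{2πix}`. -/
def e (x : ℝ) : ℂ := Complex.exp (2 * Real.pi * Complex.I * x)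

/-- The terms of the nonlinear twist `F(s;f) = ∑ a(n) n^{-s} e(-f(n))`. -/
def twistTerm (a : ℕ → ℂ) (f : TwistFun) (s : ℂ) (n : ℕ) : ℂ :=
  a n * (n : ℂ) ^ (-s) * e (-(evalT f n))

/-- The nonlinear twist `F(s;f) = ∑ a(n) n^{-s} e(-f(n))` (as a series). -/
def twistSeries (a : ℕ → ℂ) (f : TwistFun) (s : ℂ) : ℂ := ∑' n, twistTerm a f s n

/-- `Φ(z,ξ,𝛂) = z^{1/d} - 2π f(qz/ξ,𝛂)`. -/
def PhiT (d q : ℝ) (f : TwistFun) (z ξ : ℝ) : ℝ :=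
  z ^ (1 / d) - 2 * Real.pi * evalT f (q * z / ξ)

/-- `g = T^♭(f)` for `f` with positive leading coefficient: `g` is the (unique) twist
function with nonnegative exponents describing the asymptotic expansion, up to terms
tending to `0`, of `Φ(x₀(ξ),ξ,𝛂)/(2π)` where `x₀(ξ)` is the critical point of
`z ↦ Φ(z,ξ,𝛂)`. -/
def IsDualPos (d q : ℝ) (f g : TwistFun) : Prop :=
  ValidT g ∧
  ∃ x0 : ℝ → ℝ,
    (∀ᶠ ξ in atTop, 1 ≤ x0 ξ ∧ HasDerivAt (fun z => PhiT d q f z ξ) 0 (x0 ξ)) ∧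
    Tendsto (fun ξ => PhiT d q f (x0 ξ) ξ / (2 * Real.pi) - evalT g ξ) atTop (nhds 0)

/-- `g = T^♭(f)`, the truncated dual twist function: for a negative leading
coefficient it is defined by `f* = -(-f)*`. -/
def IsDual (d q : ℝ) (f g : TwistFun) : Prop :=
  (0 < f (lexpT f) ∧ IsDualPos d q f g) ∨ (f (lexpT f) < 0 ∧ IsDualPos d q (-f) (-g))

/-- A shift: `P ∈ ℤ[ξ]` with `deg P ≥ 1`, acting by `S(f) = f + P`. -/
def IsShiftPoly (P : TwistFun) : Prop :=
  P ≠ 0 ∧ (∀ κ ∈ P.support, ∃ n : ℕ, 1 ≤ n ∧ κ = (n : ℝ)) ∧ ∀ κ, ∃ z : ℤ, P κ = (z : ℝ)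

/-- `TwistRep d q f0 f L` holds when `f = G(f0)` for some well-defined operator
`G = T^♭Sₖ⋯T^♭S₁` (possibly composed with further trivial shifts), starting from a
base twist function `f0` with `0 ≤ lexp(f0) ≤ 1/d`, the list `L = [ℓ₁,…,ℓₖ]` recording
the leading exponents `ℓⱼ = lexp(SⱼT^♭⋯T^♭S₁(f0)) > 1/d` at each application of `T^♭`. -/
inductive TwistRep (d q : ℝ) : TwistFun → TwistFun → List ℝ → Prop
  | base (f0 : TwistFun) : ValidT f0 → lexpT f0 ≤ 1 / d → TwistRep d q f0 f0 []
  | shift (f0 f P : TwistFun) (L : List ℝ) : TwistRep d q f0 f L → IsShiftPoly P →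
      TwistRep d q f0 (f + P) L
  | dual (f0 f P g : TwistFun) (L : List ℝ) : TwistRep d q f0 f L → IsShiftPoly P →
      1 / d < lexpT (f + P) → IsDual d q (f + P) g → TwistRep d q f0 g (L ++ [lexpT (f + P)])

/-- `q = q_F (2πd)^{-d}`, the parameter entering `Φ`. -/
def qop (E : ExtSelberg) : ℝ := E.conductor * (2 * Real.pi * E.degree) ^ (-E.degree)

/-- The class `𝒜(F)` of twist functions obtained from some base `f0` by a chain of
shifts and truncated duality operators. -/
def InA (E : ExtSelberg) (f : TwistFun) : Prop :=
  ∃ f0 L, TwistRep E.degree (qop E) f0 f L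

/-- `F(s;f)` extends to an entire function. -/
def EntireTwist (E : ExtSelberg) (f : TwistFun) : Prop :=
  ∃ T : ℂ → ℂ, Differentiable ℂ T ∧ ∀ s, 1 < s.re → T s = twistSeries E.a f s

/-- `Spec*(F)`: the set of `α ∈ ℝ` for which the standard twist
`F(s,α) = ∑ a(n) n^{-s} e(-α n^{1/d})` is not entire. -/
def SpecStar (E : ExtSelberg) : Set ℝ :=
  {α | ¬ EntireTwist E (Finsupp.single (1 / E.degree) α)}

/-- `Spec(F)`: the positive part of `Spec*(F)`. -/
def Spec (E : ExtSelberg) : Set ℝ := {α | 0 < α ∧ α ∈ SpecStar E}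

/-- The subclass `𝒜₀(F) ⊆ 𝒜(F)`: chains starting from a base `f0(ξ) = α ξ^{1/d}` with
`α ∈ Spec*(F)`. -/
def InA0 (E : ExtSelberg) (f : TwistFun) : Prop :=
  ∃ α ∈ SpecStar E, ∃ L, TwistRep E.degree (qop E) (Finsupp.single (1 / E.degree) α) f L

/-- The subclass `𝒜₀₀(F) ⊆ 𝒜₀(F)`: chains starting from `f0 = 0` (that is, `α = 0`). -/
def InA00 (E : ExtSelberg) (f : TwistFun) : Prop :=
  (0 : ℝ) ∈ SpecStar E ∧
    ∃ L, TwistRep E.degree (qop E) (Finsupp.single (1 / E.degree) (0 : ℝ)) f L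

/-- `D(f) = ∏ⱼ (dℓⱼ - 1)` attached to a representation with exponent list `L`. -/
def Dprod (d : ℝ) (L : List ℝ) : ℝ := (L.map fun ℓ => d * ℓ - 1).prod

/-- The weight `ω(f)`: the minimal number of duality operators among all
representations of `f` in `𝒜(F)`. -/
def weightT (E : ExtSelberg) (f : TwistFun) : ℕ :=
  sInf {n | ∃ f0 L, TwistRep E.degree (qop E) f0 f L ∧ L.length = n}
/-! At the critical point `x₀(ξ)` of `z ↦ Φ(z, ξ)`, with `u = q x₀ / ξ`, the vanishing of
`∂Φ/∂z` gives `x₀^{1/d} ≍ u^{κ₀}` and turns `Φ(x₀, ξ)` into a sum that is `O(u^{κ₀})`. Since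
`ξ = q x₀ / u ≫ u^{dκ₀ - 1}`, this is `O(ξ^{κ₀/(dκ₀-1)})`. Hence if `κ₀ = lexp(f) ≥ 1`, every
exponent of `T^♭(f)` is at most `1/(d-1)`, which is `< 1` for `d > 2`. By induction every twist
function of the chain, like `f₀`, has all exponents `< 1`, so after the shift `Sⱼ` the leading
exponent is that of `Pⱼ`, a positive integer, hence `> 1/d`. -/

open Real

lemma tendsto_rpow_div_rpow_atTop {a b : ℝ} (h : a < b) :
    Tendsto (fun x : ℝ => x ^ a / x ^ b) atTop (𝓝 0) := by
  refine (tendsto_rpow_neg_atTop (sub_pos.mpr h)).congr' ?_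
  filter_upwards [eventually_gt_atTop 0] with x hx
  rw [neg_sub, rpow_sub hx]

lemma isLittleO_rpow_rpow_atTop {a b : ℝ} (h : a < b) :
    (fun x : ℝ => x ^ a) =o[atTop] fun x => x ^ b := by
  refine (isLittleO_iff_tendsto' ?_).mpr (tendsto_rpow_div_rpow_atTop h)
  filter_upwards [eventually_gt_atTop 0] with x hx h0
  exact absurd h0 (rpow_pos_of_pos hx b).ne'

lemma tendsto_sum_mul_rpow_div_rpow_atTop (s : Finset ℝ) (c : ℝ → ℝ) {m : ℝ}
    (hle : ∀ κ ∈ s, κ ≤ m) (hm : m ∈ s) :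
    Tendsto (fun ξ : ℝ => (∑ κ ∈ s, c κ * ξ ^ κ) / ξ ^ m) atTop (𝓝 (c m)) := by
  have hterm : ∀ κ ∈ s, Tendsto (fun ξ : ℝ => c κ * (ξ ^ κ / ξ ^ m)) atTop
      (𝓝 (if κ = m then c κ else 0)) := by
    intro κ hκ
    split_ifs with h
    · subst h
      refine tendsto_const_nhds.congr' ?_
      filter_upwards [eventually_gt_atTop 0] with ξ hξ
      rw [div_self (rpow_pos_of_pos hξ κ).ne', mul_one]
    · simpa using (tendsto_rpow_div_rpow_atTop ((hle κ hκ).lt_of_ne h)).const_mul (c κ)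
  have hsum := tendsto_finsetSum s hterm
  rw [Finset.sum_ite_eq' s m c, if_pos hm] at hsum
  simpa only [Finset.sum_div, mul_div_assoc] using hsum

lemma exists_forall_ge_half_mul_rpow_le_sum (s : Finset ℝ) (c : ℝ → ℝ) {m : ℝ}
    (hle : ∀ κ ∈ s, κ ≤ m) (hm : m ∈ s) (hc : 0 < c m) :
    ∃ U, ∀ u ≥ U, c m / 2 * u ^ m ≤ ∑ κ ∈ s, c κ * u ^ κ := by
  refine eventually_atTop.mp ?_
  filter_upwards [(tendsto_sum_mul_rpow_div_rpow_atTop s c hle hm).eventually_const_lt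
    (half_lt_self hc), eventually_gt_atTop 0] with u h hu
  exact ((lt_div_iff₀ (rpow_pos_of_pos hu m)).mp h).le

lemma abs_sum_mul_rpow_le (s : Finset ℝ) (c : ℝ → ℝ) {K u : ℝ}
    (hs : ∀ κ ∈ s, 0 ≤ κ ∧ κ ≤ K) (hu : 0 ≤ u) :
    |∑ κ ∈ s, c κ * u ^ κ| ≤ (∑ κ ∈ s, |c κ|) * max 1 u ^ K := by
  refine (Finset.abs_sum_le_sum_abs _ _).trans ?_
  rw [Finset.sum_mul]
  refine Finset.sum_le_sum fun κ hκ => ?_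
  rw [abs_mul, abs_of_nonneg (rpow_nonneg hu κ)]
  gcongr
  calc u ^ κ ≤ max 1 u ^ κ := rpow_le_rpow hu (le_max_right _ _) (hs κ hκ).1
    _ ≤ max 1 u ^ K := rpow_le_rpow_of_exponent_le (le_max_left _ _) (hs κ hκ).2

lemma le_lexpT {f : TwistFun} {κ : ℝ} (h : κ ∈ f.support) : κ ≤ lexpT f := by
  rw [lexpT, dif_pos ⟨κ, h⟩]
  exact Finset.le_max' _ _ h

lemma lexpT_mem_support {f : TwistFun} (h : f ≠ 0) : lexpT f ∈ f.support := by
  have hne : f.support.Nonempty := Finsupp.support_nonempty_iff.mpr h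
  rw [lexpT, dif_pos hne]
  exact f.support.max'_mem hne

lemma lexpT_neg (f : TwistFun) : lexpT (-f) = lexpT f := by
  simp [lexpT, Finsupp.support_neg]

lemma validT_neg {f : TwistFun} (h : ValidT f) : ValidT (-f) := by
  intro κ hκ
  exact h κ (by rwa [Finsupp.support_neg] at hκ)

lemma lexpT_le_of_isBigO {f : TwistFun} {e : ℝ} (he : 0 ≤ e)
    (h : evalT f =O[atTop] fun ξ => ξ ^ e) : lexpT f ≤ e := by
  by_contra! hlt
  have hf : f ≠ 0 := by
    rintro rfl
    simp [lexpT] at hlt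
    linarith
  have hlead : Tendsto (fun ξ => evalT f ξ / ξ ^ lexpT f) atTop (𝓝 (f (lexpT f))) :=
    tendsto_sum_mul_rpow_div_rpow_atTop f.support f (fun _ => le_lexpT) (lexpT_mem_support hf)
  have hzero : Tendsto (fun ξ => evalT f ξ / ξ ^ lexpT f) atTop (𝓝 0) :=
    (h.trans_isLittleO (isLittleO_rpow_rpow_atTop hlt)).tendsto_div_nhds_zero
  exact Finsupp.mem_support_iff.mp (lexpT_mem_support hf) (tendsto_nhds_unique hlead hzero)

lemma one_le_lexpT_of_isShiftPoly {P : TwistFun} (hP : IsShiftPoly P) : 1 ≤ lexpT P := by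
  obtain ⟨n, hn, heq⟩ := hP.2.1 _ (lexpT_mem_support hP.1)
  rw [heq]
  exact_mod_cast hn

lemma validT_add_of_isShiftPoly {P g : TwistFun} (hP : IsShiftPoly P) (hg : ValidT g) :
    ValidT (g + P) := by
  intro κ hκ
  rcases Finset.mem_union.mp (Finsupp.support_add hκ) with h | h
  · exact hg κ h
  · obtain ⟨n, -, rfl⟩ := hP.2.1 κ h
    positivity

lemma lexpT_add_of_isShiftPoly {P g : TwistFun} (hP : IsShiftPoly P) (hg : lexpT g < 1) :
    lexpT (g + P) = lexpT P := by
  have hlt : ∀ κ ∈ g.support, κ < lexpT P := fun κ hκ =>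
    ((le_lexpT hκ).trans_lt hg).trans_le (one_le_lexpT_of_isShiftPoly hP)
  have hmem : lexpT P ∈ (g + P).support := by
    have hg0 : g (lexpT P) = 0 := Finsupp.notMem_support_iff.mp fun h => (hlt _ h).false
    rw [Finsupp.mem_support_iff, Finsupp.add_apply, hg0, zero_add]
    exact Finsupp.mem_support_iff.mp (lexpT_mem_support hP.1)
  refine le_antisymm ?_ (le_lexpT hmem)
  have hne : g + P ≠ 0 := Finsupp.support_nonempty_iff.mp ⟨_, hmem⟩
  rcases Finset.mem_union.mp (Finsupp.support_add (lexpT_mem_support hne)) with h | h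
  · exact (hlt _ h).le
  · exact le_lexpT h

lemma hasDerivAt_PhiT {d q ξ x : ℝ} (f : TwistFun) (hx : 0 < x) (hu : 0 < q * x / ξ) :
    HasDerivAt (fun z => PhiT d q f z ξ)
      ((x ^ (1 / d) / d - 2 * π * ∑ κ ∈ f.support, κ * f κ * (q * x / ξ) ^ κ) / x) x := by
  have hroot : HasDerivAt (fun z : ℝ => z ^ (1 / d)) (x ^ (1 / d) / d / x) x := by
    refine (hasDerivAt_rpow_const (p := 1 / d) (Or.inl hx.ne')).congr_deriv ?_
    rw [rpow_sub_one hx.ne']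
    ring
  have hterm : ∀ κ ∈ f.support, HasDerivAt (fun z => f κ * (q * z / ξ) ^ κ)
      (κ * f κ * (q * x / ξ) ^ κ / x) x := by
    intro κ _
    have hin : HasDerivAt (fun z : ℝ => q * z / ξ) (q / ξ) x := by
      simpa using ((hasDerivAt_id x).const_mul q).div_const ξ
    refine (((hasDerivAt_rpow_const (p := κ) (Or.inl hu.ne')).comp x hin).const_mul
      (f κ)).congr_deriv ?_
    have hq : q ≠ 0 := by rintro rfl; simp at hu
    have hξ : ξ ≠ 0 := by rintro rfl; simp at hu
    rw [rpow_sub_one hu.ne']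
    field_simp
  have hsum := (HasDerivAt.fun_sum hterm).const_mul (2 * π)
  refine (hroot.sub hsum).congr_deriv ?_
  rw [← Finset.sum_div]
  ring

section Critical

variable {d q ξ x : ℝ} {f : TwistFun}

lemma rpow_one_div_eq_of_hasDerivAt_PhiT (hd : 0 < d) (hx : 0 < x) (hu : 0 < q * x / ξ)
    (hcrit : HasDerivAt (fun z => PhiT d q f z ξ) 0 x) :
    x ^ (1 / d) = 2 * π * d * ∑ κ ∈ f.support, κ * f κ * (q * x / ξ) ^ κ := by
  have h := (hasDerivAt_PhiT f hx hu).unique hcrit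
  rw [div_eq_zero_iff, or_iff_left hx.ne', sub_eq_zero, div_eq_iff hd.ne'] at h
  linarith

lemma PhiT_eq_of_hasDerivAt_PhiT (hd : 0 < d) (hx : 0 < x) (hu : 0 < q * x / ξ)
    (hcrit : HasDerivAt (fun z => PhiT d q f z ξ) 0 x) :
    PhiT d q f x ξ = 2 * π * ∑ κ ∈ f.support, (d * κ - 1) * f κ * (q * x / ξ) ^ κ := by
  rw [PhiT, rpow_one_div_eq_of_hasDerivAt_PhiT hd hx hu hcrit, evalT, Finset.mul_sum,
    Finset.mul_sum, Finset.mul_sum, ← Finset.sum_sub_distrib]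
  exact Finset.sum_congr rfl fun κ _ => by ring

end Critical

lemma rpow_le_of_mul_rpow_le_rpow {d κ a u x : ℝ} (hd : 1 < d) (hκ : 1 ≤ κ) (ha : 0 < a)
    (hu : 0 < u) (hxu : a ^ d * u ≤ x) (hax : a * u ^ κ ≤ x ^ (1 / d)) :
    u ^ κ ≤ (x / (a ^ d * u)) ^ (1 / (d - 1)) := by
  have hd0 : 0 < d := by linarith
  have hx : 0 < x := lt_of_lt_of_le (by positivity) hxu
  have hpow : 0 < κ * d - 1 := by nlinarith
  have hx_ge : a ^ d * u ^ (κ * d) ≤ x := by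
    calc a ^ d * u ^ (κ * d) = (a * u ^ κ) ^ d := by
          rw [mul_rpow ha.le (by positivity), ← rpow_mul hu.le]
      _ ≤ (x ^ (1 / d)) ^ d := by gcongr
      _ = x := by rw [← rpow_mul hx.le, one_div_mul_cancel hd0.ne', rpow_one]
  have hbound : u ^ (κ * d - 1) ≤ x / (a ^ d * u) := by
    rw [rpow_sub_one hu.ne', le_div_iff₀ (by positivity)]
    calc u ^ (κ * d) / u * (a ^ d * u) = a ^ d * u ^ (κ * d) := by field_simp
      _ ≤ x := hx_ge
  have hone : 1 ≤ x / (a ^ d * u) := (one_le_div (by positivity)).mpr hxu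
  calc u ^ κ = (u ^ (κ * d - 1)) ^ (κ / (κ * d - 1)) := by
        rw [← rpow_mul hu.le, mul_div_cancel₀ _ hpow.ne']
    _ ≤ (x / (a ^ d * u)) ^ (κ / (κ * d - 1)) := by gcongr
    _ ≤ (x / (a ^ d * u)) ^ (1 / (d - 1)) := by
        refine rpow_le_rpow_of_exponent_le hone ?_
        rw [div_le_div_iff₀ hpow (by linarith)]
        nlinarith

lemma max_one_rpow_le_of_hasDerivAt_PhiT {d q ξ x U α : ℝ} {f : TwistFun} (hd : 1 < d)
    (hq : 0 < q) (hl : 1 ≤ lexpT f) (hα : 0 < α)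
    (hU : ∀ u ≥ U, α / 2 * u ^ lexpT f ≤ ∑ κ ∈ f.support, κ * f κ * u ^ κ)
    (hx : 0 < x) (hξ : q * (π * d * α) ^ d ≤ ξ)
    (hcrit : HasDerivAt (fun z => PhiT d q f z ξ) 0 x) :
    max 1 (q * x / ξ) ^ lexpT f
      ≤ max U 1 ^ lexpT f + (ξ / (q * (π * d * α) ^ d)) ^ (1 / (d - 1)) := by
  have hd0 : 0 < d := by linarith
  have hξ0 : 0 < ξ := lt_of_lt_of_le (by positivity) hξ
  set u := q * x / ξ with hu_def
  have hu : 0 < u := by positivity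
  have hrest : 0 ≤ (ξ / (q * (π * d * α) ^ d)) ^ (1 / (d - 1)) := by positivity
  rcases le_total u (max U 1) with hle | hge
  · have : max 1 u ^ lexpT f ≤ max U 1 ^ lexpT f :=
      rpow_le_rpow (by positivity) (max_le (le_max_right U 1) hle) (by linarith)
    linarith
  · have hax : π * d * α * u ^ lexpT f ≤ x ^ (1 / d) := by
      rw [rpow_one_div_eq_of_hasDerivAt_PhiT hd0 hx hu hcrit]
      have hSu := hU u ((le_max_left U 1).trans hge)
      have h2πd : 0 < 2 * π * d := by positivity
      nlinarith
    have hxu : (π * d * α) ^ d * u ≤ x := by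
      rw [hu_def, ← mul_div_assoc, div_le_iff₀ hξ0]
      nlinarith
    have hratio : x / ((π * d * α) ^ d * u) = ξ / (q * (π * d * α) ^ d) := by
      rw [hu_def]
      field_simp
    rw [max_eq_right ((le_max_right U 1).trans hge), ← hratio]
    have hM : 0 ≤ max U 1 ^ lexpT f := by positivity
    linarith [rpow_le_of_mul_rpow_le_rpow hd hl (by positivity) hu hxu hax]

lemma isBigO_PhiT_critical {d q : ℝ} (hd : 1 < d) (hq : 0 < q) {f : TwistFun} (hv : ValidT f)
    (hl : 1 ≤ lexpT f) (hpos : 0 < f (lexpT f)) {x0 : ℝ → ℝ}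
    (hx0 : ∀ᶠ ξ in atTop, 1 ≤ x0 ξ ∧ HasDerivAt (fun z => PhiT d q f z ξ) 0 (x0 ξ)) :
    (fun ξ => PhiT d q f (x0 ξ) ξ) =O[atTop] fun ξ => ξ ^ (1 / (d - 1)) := by
  have hd0 : 0 < d := by linarith
  set κ₀ := lexpT f
  set α := κ₀ * f κ₀
  have hα : 0 < α := mul_pos (by linarith) hpos
  obtain ⟨U, hU⟩ : ∃ U, ∀ u ≥ U, α / 2 * u ^ κ₀ ≤ ∑ κ ∈ f.support, κ * f κ * u ^ κ :=
    exists_forall_ge_half_mul_rpow_le_sum f.support (fun κ => κ * f κ) (fun _ => le_lexpT)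
      (Finsupp.mem_support_iff.mpr hpos.ne') hα
  set c := q * (π * d * α) ^ d
  set e := 1 / (d - 1)
  set C := ∑ κ ∈ f.support, |(d * κ - 1) * f κ|
  set M := max U 1 ^ κ₀
  refine IsBigO.of_bound (2 * π * C * (M + (c ^ e)⁻¹)) ?_
  filter_upwards [hx0, eventually_ge_atTop (max 1 c)] with ξ ⟨hx1, hcrit⟩ hξ
  have hξ1 : 1 ≤ ξ := (le_max_left _ _).trans hξ
  have hξ0 : 0 < ξ := by linarith
  have hx : 0 < x0 ξ := by linarith
  have hu : 0 < q * x0 ξ / ξ := by positivity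
  have hc : 0 < c := mul_pos hq (rpow_pos_of_pos (by positivity) d)
  have hmax := max_one_rpow_le_of_hasDerivAt_PhiT hd hq hl hα hU hx
    ((le_max_right _ _).trans hξ) hcrit
  rw [div_rpow hξ0.le hc.le] at hmax
  have hξe : 1 ≤ ξ ^ e := one_le_rpow hξ1 (one_div_nonneg.mpr (by linarith))
  have hC : 0 ≤ C := Finset.sum_nonneg fun _ _ => abs_nonneg _
  have hM : 0 ≤ M := by positivity
  rw [norm_eq_abs, norm_eq_abs, abs_of_pos (rpow_pos_of_pos hξ0 e),
    PhiT_eq_of_hasDerivAt_PhiT hd0 hx hu hcrit, abs_mul, abs_of_pos two_pi_pos]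
  calc 2 * π * |∑ κ ∈ f.support, (d * κ - 1) * f κ * (q * x0 ξ / ξ) ^ κ|
      ≤ 2 * π * (C * max 1 (q * x0 ξ / ξ) ^ κ₀) := by
        gcongr
        exact abs_sum_mul_rpow_le _ _ (fun κ hκ => ⟨hv κ hκ, le_lexpT hκ⟩) hu.le
    _ ≤ 2 * π * (C * (M + ξ ^ e / c ^ e)) := by gcongr
    _ ≤ 2 * π * (C * ((M + (c ^ e)⁻¹) * ξ ^ e)) := by
        gcongr
        rw [div_eq_inv_mul]
        nlinarith
    _ = 2 * π * C * (M + (c ^ e)⁻¹) * ξ ^ e := by ring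

lemma IsDualPos.lexpT_le {d q : ℝ} {f g : TwistFun} (h : IsDualPos d q f g) (hd : 1 < d)
    (hq : 0 < q) (hv : ValidT f) (hl : 1 ≤ lexpT f) (hpos : 0 < f (lexpT f)) :
    lexpT g ≤ 1 / (d - 1) := by
  obtain ⟨-, x0, hx0, hlim⟩ := h
  have he : 0 < 1 / (d - 1) := one_div_pos.mpr (by linarith)
  have hPhi := (isBigO_PhiT_critical hd hq hv hl hpos hx0).const_mul_left (2 * π)⁻¹
  have hone : (fun _ : ℝ => (1 : ℝ)) =O[atTop] fun ξ => ξ ^ (1 / (d - 1)) := by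
    simpa using (isLittleO_rpow_rpow_atTop he).isBigO
  have herr := (hlim.isBigO_one ℝ).trans hone
  refine lexpT_le_of_isBigO he.le ((hPhi.sub herr).congr_left fun ξ => ?_)
  simp only [div_eq_inv_mul]
  ring

lemma IsDual.validT {d q : ℝ} {f g : TwistFun} (h : IsDual d q f g) : ValidT g := by
  rcases h with ⟨-, hdual⟩ | ⟨-, hdual⟩
  · exact hdual.1
  · simpa using validT_neg hdual.1

lemma IsDual.lexpT_lt_one {d q : ℝ} {f g : TwistFun} (h : IsDual d q f g) (hd : 2 < d)
    (hq : 0 < q) (hv : ValidT f) (hl : 1 ≤ lexpT f) : lexpT g < 1 := by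
  have hlt : 1 / (d - 1) < 1 := by rw [div_lt_one (by linarith)]; linarith
  refine lt_of_le_of_lt ?_ hlt
  rcases h with ⟨hpos, hdual⟩ | ⟨hneg, hdual⟩
  · exact hdual.lexpT_le (by linarith) hq hv hl hpos
  · have hpos : 0 < (-f) (lexpT (-f)) := by
      rw [lexpT_neg, Finsupp.neg_apply]
      linarith
    simpa only [lexpT_neg] using
      hdual.lexpT_le (by linarith) hq (validT_neg hv) (by rwa [lexpT_neg]) hpos

lemma qop_pos (E : ExtSelberg) (hd : 0 < E.degree) : 0 < qop E := by
  have hlam : 0 < ∏ j, E.lam j ^ (2 * E.lam j) :=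
    Finset.prod_pos fun j _ => rpow_pos_of_pos (E.hlam j) _
  have hQ := E.hQ
  unfold qop ExtSelberg.conductor
  positivity

/-- **Fact 1.** If `d > 2` then in any chain `G(f₀) = T^♭Sₖ⋯T^♭S₁(f₀)` with base
`0 ≤ lexp(f₀) ≤ 1/d` one has `ℓⱼ = deg Sⱼ` for `j = 1,…,k`; in particular the
well-definedness condition `ℓⱼ > 1/d` is automatically satisfied. -/
theorem fact1 (E : ExtSelberg) (hd : 2 < E.degree) (k : ℕ)
    (f0 : TwistFun) (h0 : ValidT f0) (h1 : lexpT f0 ≤ 1 / E.degree)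
    (P : ℕ → TwistFun) (hP : ∀ j < k, IsShiftPoly (P j))
    (g : ℕ → TwistFun) (hg0 : g 0 = f0)
    (hchain : ∀ j < k, IsDual E.degree (qop E) (g j + P j) (g (j + 1))) :
    ∀ j < k, lexpT (g j + P j) = lexpT (P j) ∧ 1 / E.degree < lexpT (g j + P j) := by
  have hd0 : 0 < E.degree := by linarith
  have hinv_lt : 1 / E.degree < 1 := (div_lt_one hd0).mpr (by linarith)
  have hsmall : ∀ j ≤ k, ValidT (g j) ∧ lexpT (g j) < 1 := by
    intro j
    induction j with
    | zero =>
      intro _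
      rw [hg0]
      exact ⟨h0, h1.trans_lt hinv_lt⟩
    | succ j ih =>
      intro hj
      obtain ⟨hv, hl⟩ := ih (by omega)
      have hlexp := lexpT_add_of_isShiftPoly (hP j hj) hl
      refine ⟨(hchain j hj).validT, (hchain j hj).lexpT_lt_one hd (qop_pos E hd0)
        (validT_add_of_isShiftPoly (hP j hj) hv) ?_⟩
      exact hlexp ▸ one_le_lexpT_of_isShiftPoly (hP j hj)
  intro j hj
  have hlexp := lexpT_add_of_isShiftPoly (hP j hj) (hsmall j hj.le).2
  exact ⟨hlexp, hlexp ▸ hinv_lt.trans_le (one_le_lexpT_of_isShiftPoly (hP j hj))⟩
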